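/- arXiv:2411.15069 — 2 statements merged into one kernel-verified Lean document; each statement's English description precedes it below -/
import Mathlib

section
/- Let $L, c \in \mathbb{R}$, $g \in \mathbb{C}$, and set $r(t) := e^{itL} g$. Let $w, N : \mathbb{R} \to \mathbb{C}$ with $N$ continuous and $w$ differentiable, and define $P(t) := \mathrm{Re}(\overline{r(t)} \, w(t)) + \tfrac{1}{2}|w(t)|^2$. Assume that for every $t \in \mathbb{R}$, $w'(t) = iL\,w(t) + 2ic\,(r(t)+w(t))\,P(t) + N(t)$. Then $P$ is differentiable and for every $t$, $P'(t) = \mathrm{Re}\big(\overline{r(t)+w(t)}\, N(t)\big)$. -/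
/-!
Differentiating, `P' = Re (conj r' * w + conj (r + w) * w')`. Since `r' = i L r`, the phase term
`i L w` of `w'` pairs with `conj r' * w` to `Re (i L |w|²) = 0`, and the cubic term is
`conj (r + w) * (2 i c P) (r + w) = 2 i c P |r + w|²`, purely imaginary because `P` is real.
Only the forcing `N` contributes.
-/

open Complex ComplexConjugate

theorem hasDerivAt_exp_I_mul_mul (L : ℝ) (g : ℂ) (t : ℝ) :
    HasDerivAt (fun s : ℝ => exp (I * s * L) * g) (I * L * (exp (I * t * L) * g)) t := by
  have h := ((((hasDerivAt_id t).ofReal_comp).const_mul I).mul_const (L : ℂ)).cexp.mul_const g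
  simp only [id, ofReal_one, mul_one] at h
  exact h.congr_deriv (by ring)

theorem HasDerivAt.re_conj_mul {f h : ℝ → ℂ} {f' h' : ℂ} {t : ℝ}
    (hf : HasDerivAt f f' t) (hh : HasDerivAt h h' t) :
    HasDerivAt (fun s => (conj (f s) * h s).re) (conj f' * h t + conj (f t) * h').re t :=
  reCLM.hasFDerivAt.comp_hasDerivAt t (hf.star.mul hh)

theorem HasDerivAt.half_norm_sq {f : ℝ → ℂ} {f' : ℂ} {t : ℝ} (hf : HasDerivAt f f' t) :
    HasDerivAt (fun s => 1 / 2 * ‖f s‖ ^ 2) (conj (f t) * f').re t := by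
  refine (hf.norm_sq.const_mul (1 / 2 : ℝ)).congr_deriv ?_
  rw [Complex.inner, mul_comm f']
  ring

theorem HasDerivAt.re_conj_mul_add_half_norm_sq {r w : ℝ → ℂ} {r' w' : ℂ} {t : ℝ}
    (hr : HasDerivAt r r' t) (hw : HasDerivAt w w' t) :
    HasDerivAt (fun s => (conj (r s) * w s).re + 1 / 2 * ‖w s‖ ^ 2)
      (conj r' * w t + conj (r t + w t) * w').re t :=
  ((hr.re_conj_mul hw).add hw.half_norm_sq).congr_deriv <| by
    simp only [map_add, add_mul, add_re]
    ring

theorem re_conj_mul_I_mul_ofReal_mul_self (z : ℂ) (x : ℝ) : (conj z * (I * x * z)).re = 0 := by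
  simp only [mul_re, mul_im, I_re, I_im, ofReal_re, ofReal_im, conj_re, conj_im]
  ring

theorem re_conj_mul_ode_eq_re_conj_mul_forcing (L c p : ℝ) (a b n : ℂ) :
    (conj (I * L * a) * b + conj (a + b) * (I * L * b + 2 * I * c * (a + b) * p + n)).re
      = (conj (a + b) * n).re := by
  have hsplit : conj (I * L * a) * b + conj (a + b) * (I * L * b + 2 * I * c * (a + b) * p + n)
      = conj b * (I * L * b) + conj (a + b) * (I * ↑(2 * c * p) * (a + b))
        + conj (a + b) * n := by
    simp only [map_mul, map_add, conj_I, conj_ofReal]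
    push_cast
    ring
  rw [hsplit, add_re, add_re, re_conj_mul_I_mul_ofReal_mul_self,
    re_conj_mul_I_mul_ofReal_mul_self, zero_add, zero_add]

theorem stmt_1_general (L c : ℝ) (g : ℂ) (r : ℝ → ℂ)
    (hr : ∀ t : ℝ, r t = Complex.exp (Complex.I * t * L) * g)
    (w N : ℝ → ℂ) (hw : Differentiable ℝ w)
    (P : ℝ → ℝ)
    (hP : ∀ t : ℝ, P t = ((starRingEnd ℂ) (r t) * w t).re + (1/2) * ‖w t‖ ^ 2)
    (hode : ∀ t : ℝ, deriv w t
      = Complex.I * (L : ℂ) * w t + 2 * Complex.I * (c : ℂ) * (r t + w t) * (P t : ℂ) + N t) :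
    ∀ t : ℝ, HasDerivAt P (((starRingEnd ℂ) (r t + w t) * N t).re) t := by
  intro t
  have hr' : HasDerivAt r (I * L * r t) t := by
    rw [funext hr]
    exact hasDerivAt_exp_I_mul_mul L g t
  have hPt := hr'.re_conj_mul_add_half_norm_sq (hw t).hasDerivAt
  rw [hode t, re_conj_mul_ode_eq_re_conj_mul_forcing] at hPt
  rwa [funext hP]

theorem stmt_1 (L c : ℝ) (g : ℂ) (r : ℝ → ℂ)
    (hr : ∀ t : ℝ, r t = Complex.exp (Complex.I * t * L) * g)
    (w N : ℝ → ℂ) (hN : Continuous N) (hw : Differentiable ℝ w)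
    (P : ℝ → ℝ)
    (hP : ∀ t : ℝ, P t = ((starRingEnd ℂ) (r t) * w t).re + (1/2) * ‖w t‖ ^ 2)
    (hode : ∀ t : ℝ, deriv w t
      = Complex.I * (L : ℂ) * w t + 2 * Complex.I * (c : ℂ) * (r t + w t) * (P t : ℂ) + N t) :
    ∀ t : ℝ, HasDerivAt P (((starRingEnd ℂ) (r t + w t) * N t).re) t :=
  stmt_1_general L c g r hr w N hw P hP hode
end

section
/- For every $s$ with $\tfrac{1}{2} \leq s \leq \tfrac{2}{3}$ there exists a constant $C > 0$ such that the following holds. Let $n_1, n_2, n_3$ be nonzero integers with $n_2 + n_3 \neq 0$ and $|n_1| \geq 4\max(|n_2|, |n_3|)$, and set $n := n_1 + n_2 + n_3$ and $H_3 := (n_1 + n_2)(n_2 + n_3)(n_3 + n_1)$. Then $\langle n_1\rangle^{s}\, \langle n_2\rangle^{s} \;\leq\; C\, \langle n\rangle^{s}\, \langle n_3\rangle^{1-s}\, \langle H_3\rangle^{1/3}$. -/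
noncomputable def jb (m : ℤ) : ℝ := Real.sqrt (1 + (m : ℝ) ^ 2)

/-!
Since `|n₂ + n₃| ≤ |n₁| / 2`, the output frequency `n` is comparable to `n₁`,
which gives `⟨n₁⟩^s ≤ 2 ⟨n⟩^s`. Two factors of the resonance function,
`n₁ + n₂` and `n₃ + n₁`, are at least `3 |n₂|` and the third is a nonzero integer, so
`⟨n₂⟩² ≤ 2 n₂² ≤ |H₃|`, whence `⟨n₂⟩^s ≤ ⟨n₂⟩^{2/3} ≤ ⟨H₃⟩^{1/3}` for `s ≤ 2/3`. The remaining
factor `⟨n₃⟩^{1-s}` is at least `1`. So `C = 2` works.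
-/

section JapaneseBracket

variable {m k : ℤ}

lemma jb_nonneg (m : ℤ) : 0 ≤ jb m := Real.sqrt_nonneg _

lemma one_le_jb (m : ℤ) : 1 ≤ jb m :=
  Real.one_le_sqrt.mpr (le_add_of_nonneg_right (sq_nonneg _))

lemma jb_sq (m : ℤ) : jb m ^ 2 = 1 + (m : ℝ) ^ 2 := Real.sq_sqrt (by positivity)

lemma abs_le_jb (m : ℤ) : |(m : ℝ)| ≤ jb m := by
  rw [jb, ← Real.sqrt_sq_eq_abs]
  exact Real.sqrt_le_sqrt (le_add_of_nonneg_left zero_le_one)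

lemma jb_le_two_mul_jb (h : |m| ≤ 2 * |k|) : jb m ≤ 2 * jb k := by
  have hsq : (m : ℝ) ^ 2 ≤ 4 * (k : ℝ) ^ 2 := by
    have : |(m : ℝ)| ≤ 2 * |(k : ℝ)| := by exact_mod_cast h
    nlinarith [sq_abs (m : ℝ), sq_abs (k : ℝ), abs_nonneg (m : ℝ)]
  rw [← pow_le_pow_iff_left₀ (jb_nonneg m) (by linarith [jb_nonneg k]) two_ne_zero, mul_pow,
    jb_sq, jb_sq]
  linarith

lemma jb_sq_le_jb (hm : m ≠ 0) (h : 2 * m ^ 2 ≤ |k|) : jb m ^ 2 ≤ jb k := by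
  have hm1 : (1 : ℝ) ≤ (m : ℝ) ^ 2 := by
    rw [← sq_abs, ← Int.cast_abs]
    exact one_le_pow₀ (by exact_mod_cast Int.one_le_abs hm)
  have hk : 2 * (m : ℝ) ^ 2 ≤ |(k : ℝ)| := by exact_mod_cast h
  rw [jb_sq]
  linarith [abs_le_jb k]

lemma jb_rpow_le_two_mul_jb_rpow {s : ℝ} (hs₀ : 0 ≤ s) (hs₁ : s ≤ 1) (h : |m| ≤ 2 * |k|) :
    jb m ^ s ≤ 2 * jb k ^ s :=
  calc jb m ^ s ≤ (2 * jb k) ^ s := Real.rpow_le_rpow (jb_nonneg m) (jb_le_two_mul_jb h) hs₀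
    _ = 2 ^ s * jb k ^ s := Real.mul_rpow zero_le_two (jb_nonneg k)
    _ ≤ 2 * jb k ^ s := by
      gcongr
      · exact Real.rpow_nonneg (jb_nonneg k) s
      · exact Real.rpow_le_self_of_one_le one_le_two hs₁

lemma jb_rpow_le_jb_rpow_third {s : ℝ} (hs : s ≤ 2 / 3) (hm : m ≠ 0) (h : 2 * m ^ 2 ≤ |k|) :
    jb m ^ s ≤ jb k ^ ((1 : ℝ) / 3) :=
  calc jb m ^ s ≤ jb m ^ ((2 : ℝ) / 3) :=
        Real.rpow_le_rpow_of_exponent_le (one_le_jb m) hs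
    _ = (jb m ^ 2) ^ ((1 : ℝ) / 3) := by
        rw [← Real.rpow_natCast, ← Real.rpow_mul (jb_nonneg m)]; norm_num
    _ ≤ jb k ^ ((1 : ℝ) / 3) :=
        Real.rpow_le_rpow (by positivity) (jb_sq_le_jb hm h) (by norm_num)

end JapaneseBracket

section HighLowLow

variable {n₁ n₂ n₃ : ℤ}

lemma abs_le_two_mul_abs_add_add (h₂ : 4 * |n₂| ≤ |n₁|) (h₃ : 4 * |n₃| ≤ |n₁|) :
    |n₁| ≤ 2 * |n₁ + n₂ + n₃| := by
  have := abs_sub_abs_le_abs_sub n₁ (-(n₂ + n₃))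
  have := abs_add_le n₂ n₃
  rw [abs_neg, sub_neg_eq_add, ← add_assoc] at *
  omega

lemma nine_mul_sq_le_abs_resonance (h₂ : 4 * |n₂| ≤ |n₁|) (h₃ : 4 * |n₃| ≤ |n₁|)
    (h₂₃ : n₂ + n₃ ≠ 0) : 9 * n₂ ^ 2 ≤ |(n₁ + n₂) * (n₂ + n₃) * (n₃ + n₁)| := by
  have h₁₂ : 3 * |n₂| ≤ |n₁ + n₂| := by
    have := abs_sub_abs_le_abs_sub n₁ (-n₂)
    rw [abs_neg, sub_neg_eq_add] at this
    omega
  have h₃₁ : 3 * |n₂| ≤ |n₃ + n₁| := by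
    have := abs_sub_abs_le_abs_sub n₁ (-n₃)
    rw [abs_neg, sub_neg_eq_add, add_comm] at this
    omega
  have h₂₃' : 1 ≤ |n₂ + n₃| := Int.one_le_abs h₂₃
  rw [abs_mul, abs_mul, ← sq_abs n₂]
  calc 9 * |n₂| ^ 2 = 3 * |n₂| * 1 * (3 * |n₂|) := by ring
    _ ≤ |n₁ + n₂| * |n₂ + n₃| * |n₃ + n₁| := by gcongr

end HighLowLow

theorem stmt_14 :
    ∀ s : ℝ, 1/2 ≤ s → s ≤ 2/3 →
      ∃ C : ℝ, 0 < C ∧ ∀ n₁ n₂ n₃ : ℤ, n₁ ≠ 0 → n₂ ≠ 0 → n₃ ≠ 0 → n₂ + n₃ ≠ 0 →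
        4 * max |n₂| |n₃| ≤ |n₁| →
        jb n₁ ^ s * jb n₂ ^ s
          ≤ C * jb (n₁ + n₂ + n₃) ^ s * jb n₃ ^ (1 - s)
              * jb ((n₁ + n₂) * (n₂ + n₃) * (n₃ + n₁)) ^ ((1:ℝ)/3) := by
  intro s hs₁ hs₂
  refine ⟨2, two_pos, fun n₁ n₂ n₃ _ hn₂ _ hn₂₃ hmax => ?_⟩
  have h₂ : 4 * |n₂| ≤ |n₁| := by omega
  have h₃ : 4 * |n₃| ≤ |n₁| := by omega
  have hout := jb_rpow_le_two_mul_jb_rpow (by linarith) (by linarith)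
    (abs_le_two_mul_abs_add_add h₂ h₃)
  have hres := jb_rpow_le_jb_rpow_third (k := (n₁ + n₂) * (n₂ + n₃) * (n₃ + n₁)) hs₂ hn₂
    (by linarith [nine_mul_sq_le_abs_resonance h₂ h₃ hn₂₃, sq_nonneg n₂])
  have hlow : 1 ≤ jb n₃ ^ (1 - s) := Real.one_le_rpow (one_le_jb n₃) (by linarith)
  have hout₀ : 0 ≤ jb (n₁ + n₂ + n₃) ^ s := Real.rpow_nonneg (jb_nonneg _) s
  calc jb n₁ ^ s * jb n₂ ^ s
      ≤ 2 * jb (n₁ + n₂ + n₃) ^ s * 1 * jb ((n₁ + n₂) * (n₂ + n₃) * (n₃ + n₁)) ^ ((1:ℝ)/3) := by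
        rw [mul_one]
        exact mul_le_mul hout hres (Real.rpow_nonneg (jb_nonneg n₂) s) (by positivity)
    _ ≤ _ := by gcongr; exact Real.rpow_nonneg (jb_nonneg _) _
end
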